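/- (Meyer–Wallach measure of the time-evolved N-body state) Let N ≥ 2 and let ψ_t be the time-evolved N-body state. For each p ∈ {1,…,N} let ρ_p(t) be the 2×2 reduced density matrix of qubit p, with entries ρ_p(t)_{xy} = Σ_{j : {1,…,N}\{p} → {0,1}} ψ_t(x∪j)·conj(ψ_t(y∪j)). Then the Meyer–Wallach measure Q_1(t) = (1/N)·Σ_{p=1}^{N} 2·(1 − Σ_{x,y}|ρ_p(t)_{xy}|²) satisfies Q_1(t) = 1 − (1/N)·Σ_{p=1}^{N} Π_{b ≠ p} cos²(Φ_{pb}·t/2), where Φ_{pb} is the signed entangling phase of the pair (p,b) (with Φ_{pb} = Φ_{bp}). -/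

import Mathlib

/-!
Fix all qubits except `p` to `j`. The phase difference between the branches `x` and `y` of
qubit `p` only involves the pairs `(p, b)`, so it is a sum over `b ≠ p` of terms depending on
`j b` alone, and the sum over `j` defining `ρ_p(x, y)` factorises into a product over `b ≠ p`
of sums of two unimodular terms, of modulus `2 |cos (half their phase difference)|`.
On the diagonal the phases cancel; off it, each half-angle is `± Φ_{pb} t / 2`. Hence
`Tr ρ_p² = (1 + ∏_{b ≠ p} cos² (Φ_{pb} t / 2)) / 2`.
-/

open Real

/-- Extend an assignment of bit `x` to qubit `p` and bits `j` to the remaining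
qubits into a full bit string. -/
def QGEM.mergeOne {N : ℕ} (p : Fin N) (x : Fin 2)
    (j : {i : Fin N // i ≠ p} → Fin 2) : Fin N → Fin 2 :=
  fun i => if h : i = p then x else j ⟨i, h⟩

theorem Fintype.sum_sum_eq_sum_subtype_ne {ι M : Type*} [Fintype ι] [DecidableEq ι]
    [AddCommMonoid M] (d : ι → ι → M) (p : ι)
    (hd : ∀ a b, a ≠ p → b ≠ p → d a b = 0) (hpp : d p p = 0) :
    ∑ a, ∑ b, d a b = ∑ b : {b // b ≠ p}, (d p b + d b p) := by
  have hrow : ∀ a : {a // a ≠ p}, ∑ b, d a b = d a p := fun a => by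
    rw [Fintype.sum_eq_add_sum_subtype_ne _ p,
      Finset.sum_eq_zero fun (b : {b // b ≠ p}) _ => hd a b a.2 b.2, add_zero]
  rw [Fintype.sum_eq_add_sum_subtype_ne _ p, Fintype.sum_eq_add_sum_subtype_ne (d p) p, hpp,
    zero_add, Finset.sum_congr rfl fun a _ => hrow a, Finset.sum_add_distrib]

theorem Complex.sum_pi_exp_sum_eq_prod {ι β : Type*} [Fintype ι] [DecidableEq ι] [Fintype β]
    (h : ι → β → ℂ) :
    ∑ j : ι → β, Complex.exp (∑ i, h i (j i)) = ∏ i, ∑ v, Complex.exp (h i v) := by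
  simp_rw [Complex.exp_sum]
  exact (Fintype.prod_sum fun i v => Complex.exp (h i v)).symm

theorem Complex.norm_exp_I_mul_add_exp_I_mul_sq (a b : ℝ) :
    ‖Complex.exp (Complex.I * a) + Complex.exp (Complex.I * b)‖ ^ 2 =
      4 * Real.cos ((a - b) / 2) ^ 2 := by
  have h : Complex.exp (Complex.I * a) + Complex.exp (Complex.I * b) =
      Complex.exp (Complex.I * ((a + b) / 2 : ℝ)) * (2 * Complex.cos ((a - b) / 2 : ℝ)) := by
    rw [Complex.two_cos, mul_add, ← Complex.exp_add, ← Complex.exp_add]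
    congr 1 <;> push_cast <;> ring_nf
  rw [h, norm_mul, norm_mul, Complex.norm_exp_I_mul_ofReal, ← Complex.ofReal_cos,
    Complex.norm_real, Real.norm_eq_abs, one_mul, mul_pow, sq_abs]
  norm_num

theorem Complex.norm_one_div_two_pow_mul_prod_exp_add_exp_sq {ι : Type*} [Fintype ι] {N : ℕ}
    (hN : Fintype.card ι + 1 = N) (a b : ι → ℝ) :
    ‖((1 / 2 ^ N : ℝ) : ℂ) *
        ∏ i, (Complex.exp (Complex.I * a i) + Complex.exp (Complex.I * b i))‖ ^ 2 =
      1 / 4 * ∏ i, Real.cos ((a i - b i) / 2) ^ 2 := by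
  rw [norm_mul, mul_pow, norm_prod, ← Finset.prod_pow]
  simp_rw [Complex.norm_exp_I_mul_add_exp_I_mul_sq]
  rw [Finset.prod_mul_distrib, Finset.prod_const, Finset.card_univ, Complex.norm_real,
    Real.norm_eq_abs, abs_of_nonneg (by positivity), div_pow, one_pow]
  have h4 : ((2 : ℝ) ^ N) ^ 2 = 4 * 4 ^ Fintype.card ι := by
    rw [← pow_mul, mul_comm, pow_mul, ← hN, pow_succ']
    norm_num
  rw [h4]
  field_simp

namespace QGEM

variable {N : ℕ}

def pairPhase (φ : Fin N → Fin N → Fin 2 → Fin 2 → ℝ) (J : Fin N → Fin 2) : ℝ :=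
  ∑ p, ∑ q, if p < q then φ p q (J p) (J q) else 0

def localPhase (φ : Fin N → Fin N → Fin 2 → Fin 2 → ℝ) (p b : Fin N) (x v : Fin 2) :
    ℝ :=
  (if p < b then φ p b x v else 0) + (if b < p then φ b p v x else 0)

def entanglingPhase (f : Fin 2 → Fin 2 → ℝ) : ℝ := f 0 1 + f 1 0 - f 0 0 - f 1 1

def reducedDensity (ψ : (Fin N → Fin 2) → ℂ) (p : Fin N) (x y : Fin 2) : ℂ :=
  ∑ j : {i : Fin N // i ≠ p} → Fin 2,
    ψ (mergeOne p x j) * (starRingEnd ℂ) (ψ (mergeOne p y j))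

theorem mergeOne_self (p : Fin N) (x : Fin 2) (j : {i : Fin N // i ≠ p} → Fin 2) :
    mergeOne p x j p = x := dif_pos rfl

theorem mergeOne_of_ne (p : Fin N) (x : Fin 2) (j : {i : Fin N // i ≠ p} → Fin 2)
    {i : Fin N} (hi : i ≠ p) : mergeOne p x j i = j ⟨i, hi⟩ := dif_neg hi

theorem pairPhase_mergeOne_sub (φ : Fin N → Fin N → Fin 2 → Fin 2 → ℝ) (p : Fin N)
    (x y : Fin 2) (j : {i : Fin N // i ≠ p} → Fin 2) :
    pairPhase φ (mergeOne p x j) - pairPhase φ (mergeOne p y j) =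
      ∑ i : {i : Fin N // i ≠ p}, (localPhase φ p i x (j i) - localPhase φ p i y (j i)) := by
  simp only [pairPhase, ← Finset.sum_sub_distrib]
  rw [Fintype.sum_sum_eq_sum_subtype_ne _ p]
  · refine Finset.sum_congr rfl fun i _ => ?_
    simp only [localPhase, mergeOne_self, mergeOne_of_ne _ _ _ i.2]
    split_ifs <;> ring
  · intro a b ha hb
    simp only [mergeOne_of_ne _ _ _ ha, mergeOne_of_ne _ _ _ hb, sub_self]
  · simp

theorem entanglingPhase_localPhase {φ : Fin N → Fin N → Fin 2 → Fin 2 → ℝ}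
    {Φ : Fin N → Fin N → ℝ} (hΦ : ∀ a b, a < b → Φ a b = entanglingPhase (φ a b))
    (hΦsym : ∀ a b, Φ a b = Φ b a) {p b : Fin N} (hbp : b ≠ p) :
    entanglingPhase (localPhase φ p b) = Φ p b := by
  rcases hbp.lt_or_gt with h | h
  · simp only [entanglingPhase, localPhase, if_pos h, if_neg h.not_gt, hΦsym p b, hΦ b p h]
    ring
  · simp only [entanglingPhase, localPhase, if_pos h, if_neg h.not_gt, hΦ p b h]
    ring

theorem cos_sq_half_cross_sub (f : Fin 2 → Fin 2 → ℝ) (s : ℝ) (x y : Fin 2) :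
    cos ((s * (f x 0 - f y 0) - s * (f x 1 - f y 1)) / 2) ^ 2 =
      if x = y then 1 else cos (entanglingPhase f * s / 2) ^ 2 := by
  fin_cases x <;> fin_cases y <;> simp only [entanglingPhase] <;> norm_num
  · rw [← cos_neg]
    ring_nf
  · ring_nf

theorem reducedDensity_eq (φ : Fin N → Fin N → Fin 2 → Fin 2 → ℝ) (t : ℝ)
    {ψ : (Fin N → Fin 2) → ℂ}
    (hψ : ∀ J, ψ J =
      ((1 / √(2 ^ N) : ℝ) : ℂ) * Complex.exp (Complex.I * (t * pairPhase φ J : ℝ)))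
    (p : Fin N) (x y : Fin 2) :
    reducedDensity ψ p x y =
      ((1 / 2 ^ N : ℝ) : ℂ) * ∏ i : {i : Fin N // i ≠ p},
        (Complex.exp (Complex.I * (t * (localPhase φ p i x 0 - localPhase φ p i y 0) : ℝ)) +
          Complex.exp
            (Complex.I * (t * (localPhase φ p i x 1 - localPhase φ p i y 1) : ℝ))) := by
  have hnorm : ((1 / √(2 ^ N) : ℝ) : ℂ) * ((1 / √(2 ^ N) : ℝ) : ℂ) =
      ((1 / 2 ^ N : ℝ) : ℂ) := by
    rw [← Complex.ofReal_mul, div_mul_div_comm, one_mul, Real.mul_self_sqrt (by positivity)]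
  have hterm : ∀ j : {i : Fin N // i ≠ p} → Fin 2,
      ψ (mergeOne p x j) * (starRingEnd ℂ) (ψ (mergeOne p y j)) = ((1 / 2 ^ N : ℝ) : ℂ) *
        Complex.exp (∑ i : {i : Fin N // i ≠ p},
          Complex.I * (t * (localPhase φ p i x (j i) - localPhase φ p i y (j i)) : ℝ)) := by
    intro j
    rw [hψ, hψ, map_mul, ← Complex.exp_conj, map_mul, Complex.conj_I, Complex.conj_ofReal,
      Complex.conj_ofReal, mul_mul_mul_comm, hnorm, ← Complex.exp_add, ← Finset.mul_sum,
      ← Complex.ofReal_sum, ← Finset.mul_sum, ← pairPhase_mergeOne_sub]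
    push_cast
    ring_nf
  rw [reducedDensity, Finset.sum_congr rfl fun j _ => hterm j, ← Finset.mul_sum,
    Complex.sum_pi_exp_sum_eq_prod fun (i : {i : Fin N // i ≠ p}) v =>
      Complex.I * (t * (localPhase φ p i x v - localPhase φ p i y v) : ℝ)]
  simp only [Fin.sum_univ_two]

theorem sum_sum_norm_reducedDensity_sq (hN : 1 ≤ N)
    {φ : Fin N → Fin N → Fin 2 → Fin 2 → ℝ} {Φ : Fin N → Fin N → ℝ}
    (hΦ : ∀ a b, a < b → Φ a b = entanglingPhase (φ a b))
    (hΦsym : ∀ a b, Φ a b = Φ b a) (t : ℝ) {ψ : (Fin N → Fin 2) → ℂ}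
    (hψ : ∀ J, ψ J =
      ((1 / √(2 ^ N) : ℝ) : ℂ) * Complex.exp (Complex.I * (t * pairPhase φ J : ℝ)))
    (p : Fin N) :
    ∑ x, ∑ y, ‖reducedDensity ψ p x y‖ ^ 2 =
      (1 + ∏ b ∈ Finset.univ.erase p, cos (Φ p b * t / 2) ^ 2) / 2 := by
  have hcard : Fintype.card {i : Fin N // i ≠ p} + 1 = N := by
    simp only [Fintype.card_subtype_compl, Fintype.card_fin, Fintype.card_unique]
    omega
  have hprod :
      ∏ i : {i : Fin N // i ≠ p}, cos (entanglingPhase (localPhase φ p i) * t / 2) ^ 2 =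
        ∏ b ∈ Finset.univ.erase p, cos (Φ p b * t / 2) ^ 2 := by
    rw [Finset.prod_subtype (p := (· ≠ p)) (Finset.univ.erase p) (fun b => by simp)
      fun b => cos (Φ p b * t / 2) ^ 2]
    exact Finset.prod_congr rfl fun i _ => by rw [entanglingPhase_localPhase hΦ hΦsym i.2]
  have hentry : ∀ x y, ‖reducedDensity ψ p x y‖ ^ 2 =
      1 / 4 * if x = y then 1 else ∏ b ∈ Finset.univ.erase p, cos (Φ p b * t / 2) ^ 2 := by
    intro x y
    simp_rw [reducedDensity_eq φ t hψ,
      Complex.norm_one_div_two_pow_mul_prod_exp_add_exp_sq hcard, cos_sq_half_cross_sub]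
    split_ifs
    · simp
    · exact congrArg _ hprod
  simp only [Fin.sum_univ_two, hentry]
  norm_num
  ring

end QGEM

/-- (Meyer–Wallach measure) For the time-evolved N-body QGEM state, the
Meyer–Wallach measure `Q_1(t) = (1/N)·Σ_p 2(1 − Tr ρ_p(t)²)` equals
`1 − (1/N)·Σ_p Π_{b ≠ p} cos²(Φ_{pb}·t/2)`, where `Φ_{pb}` is the signed
entangling phase of the pair `(p,b)` (extended symmetrically). -/
theorem meyer_wallach_measure (N : ℕ) (hN : 2 ≤ N)
    (φ : Fin N → Fin N → Fin 2 → Fin 2 → ℝ) (t : ℝ)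
    (Φ : Fin N → Fin N → ℝ)
    (hΦ : ∀ a b : Fin N, a < b →
      Φ a b = φ a b 0 1 + φ a b 1 0 - φ a b 0 0 - φ a b 1 1)
    (hΦsym : ∀ a b : Fin N, Φ a b = Φ b a)
    (phiJ : (Fin N → Fin 2) → ℝ)
    (hphiJ : ∀ J, phiJ J = ∑ p, ∑ q, if p < q then φ p q (J p) (J q) else 0)
    (ψ : (Fin N → Fin 2) → ℂ)
    (hψ : ∀ J, ψ J = Complex.ofReal (1 / Real.sqrt (2 ^ N)) *
      Complex.exp (Complex.I * Complex.ofReal (t * phiJ J)))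
    (ρ : Fin N → Fin 2 → Fin 2 → ℂ)
    (hρ : ∀ p x y, ρ p x y = ∑ j : {i : Fin N // i ≠ p} → Fin 2,
      ψ (QGEM.mergeOne p x j) * (starRingEnd ℂ) (ψ (QGEM.mergeOne p y j))) :
    (1 / (N : ℝ)) * ∑ p : Fin N,
        2 * (1 - ∑ x : Fin 2, ∑ y : Fin 2, ‖ρ p x y‖ ^ 2) =
      1 - (1 / (N : ℝ)) * ∑ p : Fin N,
        ∏ b ∈ Finset.univ.erase p, Real.cos (Φ p b * t / 2) ^ 2 := by
  obtain rfl : phiJ = QGEM.pairPhase φ := funext hphiJ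
  obtain rfl : ρ = QGEM.reducedDensity ψ := funext fun p => funext fun x => funext (hρ p x)
  simp_rw [QGEM.sum_sum_norm_reducedDensity_sq (by omega) hΦ hΦsym t hψ,
    show ∀ P : ℝ, 2 * (1 - (1 + P) / 2) = 1 - P from fun P => by ring,
    Finset.sum_sub_distrib, Finset.sum_const, Finset.card_univ, Fintype.card_fin, nsmul_eq_mul,
    mul_one]
  rw [mul_sub, one_div_mul_cancel (by exact_mod_cast (by omega : N ≠ 0))]
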